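/- If every co-analytic subset of ℝ that is Menger is σ-compact, then every analytic completely Baire subset of ℝ is Polish, assuming the dichotomy: for every co-analytic non-σ-compact A ⊆ ℝ there is a compact K ⊆ ℝ with K ∩ A homeomorphic to ℕ^ℕ and K ∖ A homeomorphic to ℚ. -/

import Mathlib

/-- A topological space is Menger if for every sequence of open covers there exist
finite subfamilies whose unions together cover the space. -/
def MengerSpace (X : Type*) [TopologicalSpace X] : Prop :=
  ∀ U : ℕ → Set (Set X),
    (∀ n, (∀ u ∈ U n, IsOpen u) ∧ ⋃₀ U n = Set.univ) →
    ∃ V : ℕ → Set (Set X), (∀ n, V n ⊆ U n ∧ (V n).Finite) ∧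
      (⋃ n, ⋃₀ V n) = Set.univ

/-- A space is completely Baire if every closed subspace is a Baire space. -/
def CompletelyBaire (X : Type*) [TopologicalSpace X] : Prop :=
  ∀ C : Set X, IsClosed C → BaireSpace C

/-! If `ℝ ∖ B` is σ-compact, then `B` is a `G_δ` subset of `ℝ` and hence Polish. Otherwise the
dichotomy, applied to the co-analytic set `ℝ ∖ B`, yields a compact `K` with `K ∩ B ≃ₜ ℚ`. But
`K ∩ B` is closed in `B`, hence a Baire space, while `ℚ` is not. -/

open Set Set.Notation Topology

theorem IsSigmaCompact.isGδ_compl {X : Type*} [TopologicalSpace X] [T2Space X] {s : Set X}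
    (hs : IsSigmaCompact s) : IsGδ sᶜ := by
  obtain ⟨K, hK, rfl⟩ := hs
  rw [compl_iUnion]
  exact .iInter_of_isOpen fun n => (hK n).isClosed.isOpen_compl

/-- The diagonal map `⋂ n, U n → Π n, U n` is a closed embedding into a product of Polish
spaces. -/
theorem IsGδ.polishSpace {α : Type*} [TopologicalSpace α] [PolishSpace α] {s : Set α}
    (hs : IsGδ s) : PolishSpace s := by
  obtain ⟨U, hUo, rfl⟩ := isGδ_iff_eq_iInter_nat.1 hs
  have : ∀ n, PolishSpace (U n) := fun n => (hUo n).polishSpace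
  let diag : ↥(⋂ n, U n) → ∀ n, U n := fun x n => ⟨x, mem_iInter.1 x.2 n⟩
  have hdiag : IsClosedEmbedding diag := by
    refine ⟨?_, ?_⟩
    · exact IsEmbedding.of_comp (continuous_pi fun n => continuous_subtype_val.subtype_mk _)
        (continuous_apply 0).subtype_val IsEmbedding.subtypeVal
    · have hrange : range diag = {g | ∀ n, (g n : α) = g 0} := by
        ext g
        refine ⟨?_, fun hg => ⟨⟨g 0, mem_iInter.2 fun n => hg n ▸ (g n).2⟩, ?_⟩⟩
        · rintro ⟨x, rfl⟩ n
          rfl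
        · funext n
          exact Subtype.ext (hg n).symm
      rw [hrange, ofPred_forall]
      exact isClosed_iInter fun n =>
        isClosed_eq (continuous_apply n).subtype_val (continuous_apply 0).subtype_val
  exact hdiag.polishSpace

theorem not_baireSpace_of_countable (X : Type*) [TopologicalSpace X] [T1Space X] [Countable X]
    [Nonempty X] [∀ x : X, (𝓝[≠] x).NeBot] : ¬ BaireSpace X := by
  intro _
  have hdense : Dense (⋂ x : X, {x}ᶜ) :=
    dense_iInter_of_isOpen (fun _ => isOpen_compl_singleton) fun x => dense_compl_singleton x
  rw [← compl_iUnion, iUnion_of_singleton, compl_univ] at hdense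
  exact hdense.nonempty.ne_empty rfl

def Homeomorph.preimageValInter {X : Type*} [TopologicalSpace X] (B K : Set X) :
    ↥(B ↓∩ K) ≃ₜ ↥(K ∩ B) where
  toFun x := ⟨x.1, x.2, x.1.2⟩
  invFun y := ⟨⟨y, y.2.2⟩, y.2.1⟩
  continuous_toFun := by fun_prop
  continuous_invFun := by fun_prop

theorem CompletelyBaire.baireSpace_inter {X : Type*} [TopologicalSpace X] {B K : Set X}
    (hB : CompletelyBaire B) (hK : IsClosed K) : BaireSpace ↥(K ∩ B) :=
  have := hB _ (hK.preimage continuous_subtype_val)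
  (Homeomorph.preimageValInter B K).baireSpace

theorem coanalytic_menger_sigmaCompact_implies_analytic_completelyBaire_polish_general
    (hDichotomy : ∀ A : Set ℝ, MeasureTheory.AnalyticSet Aᶜ → ¬ IsSigmaCompact A →
      ∃ K : Set ℝ, IsCompact K ∧ Nonempty (↥(K ∩ A) ≃ₜ (ℕ → ℕ)) ∧
        Nonempty (↥(K \ A) ≃ₜ ℚ)) :
    ∀ B : Set ℝ, MeasureTheory.AnalyticSet B → CompletelyBaire ↥B → PolishSpace ↥B := by
  intro B hB hCB
  by_cases hσ : IsSigmaCompact Bᶜ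
  · exact (compl_compl B ▸ hσ.isGδ_compl).polishSpace
  · obtain ⟨K, hK, -, ⟨e⟩⟩ := hDichotomy Bᶜ (by rwa [compl_compl]) hσ
    rw [Set.sdiff_compl] at e
    have := hCB.baireSpace_inter hK.isClosed
    exact (not_baireSpace_of_countable ℚ e.baireSpace).elim

theorem coanalytic_menger_sigmaCompact_implies_analytic_completelyBaire_polish
    (hMenger : ∀ A : Set ℝ, MeasureTheory.AnalyticSet Aᶜ → MengerSpace ↥A →
      IsSigmaCompact A)
    (hDichotomy : ∀ A : Set ℝ, MeasureTheory.AnalyticSet Aᶜ → ¬ IsSigmaCompact A →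
      ∃ K : Set ℝ, IsCompact K ∧ Nonempty (↥(K ∩ A) ≃ₜ (ℕ → ℕ)) ∧
        Nonempty (↥(K \ A) ≃ₜ ℚ)) :
    ∀ B : Set ℝ, MeasureTheory.AnalyticSet B → CompletelyBaire ↥B → PolishSpace ↥B :=
  coanalytic_menger_sigmaCompact_implies_analytic_completelyBaire_polish_general hDichotomy
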